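/- Let σ_k : ℝ^d → ℝ^d be L-Lipschitz with σ_k(0)=0 for each k = 1,…,N, and suppose ‖W_{0,k}‖ ≤ M and ‖Φ_k‖ ≤ C for all k, with ML ≥ 1 and (M+C)L ≥ 1. With x^k, x₀^k defined recursively as x₀^k = σ_k(W_{0,k}x₀^{k−1}), x^k = σ_k((W_{0,k}+Φ_k)x^{k−1}) from x⁰ = x₀⁰ = x, the final outputs satisfy ‖x^N − x₀^N‖ ≤ (Σ_{k=1}^N M^{N−k} L^{N−k} · L·C · ((M+C)L)^{k−1}) · ‖x‖. -/
import Mathlib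


open Finset

/-- PEFT capacity upper bound for an N-layer network:
‖x^N − x₀^N‖ ≤ (Σ_{k=1}^N M^{N−k} L^{N−k} · L·C · ((M+C)L)^{k−1}) ‖x‖.
(The sum below runs over k' = k−1 ∈ {0,…,N−1}.) -/
theorem peft_capacity_upper_bound {d N : ℕ}
    (σ : Fin N → EuclideanSpace ℝ (Fin d) → EuclideanSpace ℝ (Fin d))
    (L M C : ℝ) (hL : 0 ≤ L)
    (hσ : ∀ k, ∀ u v, ‖σ k u - σ k v‖ ≤ L * ‖u - v‖)
    (hσ0 : ∀ k, σ k 0 = 0)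
    (W Φ : Fin N → (EuclideanSpace ℝ (Fin d) →L[ℝ] EuclideanSpace ℝ (Fin d)))
    (hW : ∀ k, ‖W k‖ ≤ M) (hΦ : ∀ k, ‖Φ k‖ ≤ C)
    (hML : 1 ≤ M * L) (hMCL : 1 ≤ (M + C) * L)
    (x₀ x : ℕ → EuclideanSpace ℝ (Fin d)) (v : EuclideanSpace ℝ (Fin d))
    (hx0 : x 0 = v) (hx₀0 : x₀ 0 = v)
    (hx : ∀ k : Fin N, x (k + 1) = σ k ((W k + Φ k) (x k)))
    (hx₀ : ∀ k : Fin N, x₀ (k + 1) = σ k (W k (x₀ k))) :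
    ‖x N - x₀ N‖ ≤
      (∑ k ∈ Finset.range N,
        M ^ (N - 1 - k) * L ^ (N - 1 - k) * (L * C) * ((M + C) * L) ^ k) * ‖v‖ := by
  rcases Nat.eq_zero_or_pos N with hN | hN
  · subst hN
    simp [hx0, hx₀0]
  have k0 : Fin N := ⟨0, hN⟩
  have hM : 0 ≤ M := le_trans (norm_nonneg _) (hW k0)
  have hC : 0 ≤ C := le_trans (norm_nonneg _) (hΦ k0)
  suffices h : ∀ n, n ≤ N →
      ‖x n‖ ≤ ((M + C) * L) ^ n * ‖v‖ ∧
      ‖x n - x₀ n‖ ≤ (∑ k ∈ Finset.range n,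
        M ^ (n - 1 - k) * L ^ (n - 1 - k) * (L * C) * ((M + C) * L) ^ k) * ‖v‖ by
    exact (h N le_rfl).2
  intro n
  induction n with
  | zero =>
    intro _
    constructor
    · simp [hx0]
    · simp [hx0, hx₀0]
  | succ n ih =>
    intro hn
    have hn' : n < N := hn
    obtain ⟨h1, h2⟩ := ih (Nat.le_of_lt hn')
    set kf : Fin N := ⟨n, hn'⟩ with hkf
    have hxk : x (n + 1) = σ kf ((W kf + Φ kf) (x n)) := hx kf
    have hx₀k : x₀ (n + 1) = σ kf (W kf (x₀ n)) := hx₀ kf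
    constructor
    · -- bound on ‖x (n+1)‖
      have e1 : ‖x (n + 1)‖ ≤ L * ‖(W kf + Φ kf) (x n)‖ := by
        calc ‖x (n + 1)‖ = ‖σ kf ((W kf + Φ kf) (x n)) - σ kf 0‖ := by
              rw [hxk, hσ0, sub_zero]
          _ ≤ L * ‖(W kf + Φ kf) (x n) - 0‖ := hσ kf _ _
          _ = L * ‖(W kf + Φ kf) (x n)‖ := by rw [sub_zero]
      have e2 : ‖(W kf + Φ kf) (x n)‖ ≤ (M + C) * ‖x n‖ := by
        calc ‖(W kf + Φ kf) (x n)‖ ≤ ‖W kf + Φ kf‖ * ‖x n‖ :=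
              (W kf + Φ kf).le_opNorm _
          _ ≤ (M + C) * ‖x n‖ := by
              apply mul_le_mul_of_nonneg_right _ (norm_nonneg _)
              exact le_trans (norm_add_le _ _) (add_le_add (hW kf) (hΦ kf))
      calc ‖x (n + 1)‖ ≤ L * ((M + C) * ‖x n‖) :=
            le_trans e1 (mul_le_mul_of_nonneg_left e2 hL)
        _ ≤ L * ((M + C) * (((M + C) * L) ^ n * ‖v‖)) := by
            apply mul_le_mul_of_nonneg_left _ hL
            exact mul_le_mul_of_nonneg_left h1 (by positivity)
        _ = ((M + C) * L) ^ (n + 1) * ‖v‖ := by ring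
    · -- bound on the difference
      have e1 : ‖x (n + 1) - x₀ (n + 1)‖ ≤ L * ‖(W kf + Φ kf) (x n) - W kf (x₀ n)‖ := by
        rw [hxk, hx₀k]; exact hσ kf _ _
      have e2 : ‖(W kf + Φ kf) (x n) - W kf (x₀ n)‖ ≤ M * ‖x n - x₀ n‖ + C * ‖x n‖ := by
        have hdecomp : (W kf + Φ kf) (x n) - W kf (x₀ n)
            = W kf (x n - x₀ n) + Φ kf (x n) := by
          simp [map_sub]
          abel
        rw [hdecomp]
        refine le_trans (norm_add_le _ _) (add_le_add ?_ ?_)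
        · exact le_trans ((W kf).le_opNorm _)
            (mul_le_mul_of_nonneg_right (hW kf) (norm_nonneg _))
        · exact le_trans ((Φ kf).le_opNorm _)
            (mul_le_mul_of_nonneg_right (hΦ kf) (norm_nonneg _))
      have hsum : (∑ k ∈ Finset.range (n + 1),
            M ^ (n + 1 - 1 - k) * L ^ (n + 1 - 1 - k) * (L * C) * ((M + C) * L) ^ k)
          = M * L * (∑ k ∈ Finset.range n,
              M ^ (n - 1 - k) * L ^ (n - 1 - k) * (L * C) * ((M + C) * L) ^ k)
            + (L * C) * ((M + C) * L) ^ n := by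
        rw [Finset.sum_range_succ, Finset.mul_sum]
        congr 1
        · apply Finset.sum_congr rfl
          intro k hk
          have hk' : k < n := Finset.mem_range.mp hk
          have hnk : n + 1 - 1 - k = (n - 1 - k) + 1 := by omega
          rw [hnk, pow_succ, pow_succ]; ring
        · have : n + 1 - 1 - n = 0 := by omega
          rw [this]; ring
      rw [hsum]
      calc ‖x (n + 1) - x₀ (n + 1)‖ ≤ L * (M * ‖x n - x₀ n‖ + C * ‖x n‖) :=
            le_trans e1 (mul_le_mul_of_nonneg_left e2 hL)
        _ ≤ L * (M * ((∑ k ∈ Finset.range n,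
              M ^ (n - 1 - k) * L ^ (n - 1 - k) * (L * C) * ((M + C) * L) ^ k) * ‖v‖)
              + C * (((M + C) * L) ^ n * ‖v‖)) := by
            apply mul_le_mul_of_nonneg_left _ hL
            exact add_le_add (mul_le_mul_of_nonneg_left h2 hM)
              (mul_le_mul_of_nonneg_left h1 hC)
        _ = (M * L * (∑ k ∈ Finset.range n,
              M ^ (n - 1 - k) * L ^ (n - 1 - k) * (L * C) * ((M + C) * L) ^ k)
            + (L * C) * ((M + C) * L) ^ n) * ‖v‖ := by ring
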